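/- arXiv:2203.13593 — 2 statements merged into one kernel-verified Lean document; each statement's English description precedes it below -/
import Mathlib

section
/- Let ã₁₂ = a'₁₂ + (1/2)P₁₂ where a'₁₂ = (1/2) Σ_{i,j} sgn(i−j) e_{ij} ⊗ e_{ji} and P₁₂ = Σ_{i,j} e_{ij} ⊗ e_{ji}. Then [ã₁₂, ã₁₃] + [ã₁₂, ã₂₃] + [ã₁₃, ã₂₃] = 0, i.e. ã satisfies the classical Yang–Baxter equation with zero right-hand side. -/
/-!
Writing `f(i, j) = (sgn(i - j) + 1) / 2`, the only nonzero entry of `ã₁₂` in row `(a, b, c)` is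
`f(a, b)`, in column `(b, a, c)`: it is a transposition of tensor legs with diagonal weights, and
so are `ã₁₃` and `ã₂₃`. Weighted permutation matrices multiply by composing the permutations and
multiplying the weights, and each of the six products in the Yang–Baxter expression is
supported on one of the two 3-cycles of the legs. Using `f(j, i) = 1 - f(i, j)`, the weights collected on the two
cycles are `±(1 + S) / 4`, where `S = s_ab s_bc + s_bc s_ca + s_ca s_ab` with `s = sgn`. For the
sign function `S = -1` unless `a = b = c`, and at `a = b = c` the two cycles agree, so the two
contributions cancel.
-/

open Matrix BigOperators
open scoped Kronecker

/-- Elementary matrix `e_{ij}`. -/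
noncomputable def E (n : ℕ) (i j : Fin n) : Matrix (Fin n) (Fin n) ℂ :=
  Matrix.single i j 1

/-- `sgn(i - j)` as a complex number, with `sgn(0) = 0`. -/
def sg (n : ℕ) (i j : Fin n) : ℂ := ((((i : ℤ) - (j : ℤ)).sign : ℤ) : ℂ)

/-- Triple Kronecker product, acting on `(ℂ^n)^{⊗3}`. -/
noncomputable def K3 (n : ℕ) (A B C : Matrix (Fin n) (Fin n) ℂ) :
    Matrix ((Fin n × Fin n) × Fin n) ((Fin n × Fin n) × Fin n) ℂ :=
  A ⊗ₖ B ⊗ₖ C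

/-- `ã = (1/2) Σ sgn(i−j) e_{ij} ⊗ e_{ji} + (1/2) Σ e_{ij} ⊗ e_{ji}` in legs (1,2). -/
noncomputable def at12 (n : ℕ) :
    Matrix ((Fin n × Fin n) × Fin n) ((Fin n × Fin n) × Fin n) ℂ :=
  (1/2 : ℂ) • ∑ i : Fin n, ∑ j : Fin n, sg n i j • K3 n (E n i j) (E n j i) 1
  + (1/2 : ℂ) • ∑ i : Fin n, ∑ j : Fin n, K3 n (E n i j) (E n j i) 1

/-- The same `ã` placed in legs (1,3). -/
noncomputable def at13 (n : ℕ) :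
    Matrix ((Fin n × Fin n) × Fin n) ((Fin n × Fin n) × Fin n) ℂ :=
  (1/2 : ℂ) • ∑ i : Fin n, ∑ j : Fin n, sg n i j • K3 n (E n i j) 1 (E n j i)
  + (1/2 : ℂ) • ∑ i : Fin n, ∑ j : Fin n, K3 n (E n i j) 1 (E n j i)

/-- The same `ã` placed in legs (2,3). -/
noncomputable def at23 (n : ℕ) :
    Matrix ((Fin n × Fin n) × Fin n) ((Fin n × Fin n) × Fin n) ℂ :=
  (1/2 : ℂ) • ∑ i : Fin n, ∑ j : Fin n, sg n i j • K3 n 1 (E n i j) (E n j i)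
  + (1/2 : ℂ) • ∑ i : Fin n, ∑ j : Fin n, K3 n 1 (E n i j) (E n j i)

theorem Int.sign_sub_mul_sign_sub_cyclic {a b c : ℤ} (h : ¬(a = b ∧ b = c)) :
    (a - b).sign * (b - c).sign + (b - c).sign * (c - a).sign + (c - a).sign * (a - b).sign
      = -1 := by
  have sign_eq (x : ℤ) : x.sign = if 0 < x then 1 else if x = 0 then 0 else -1 := by
    split_ifs with hpos hzero
    · exact Int.sign_eq_one_of_pos hpos
    · simp [hzero]
    · exact Int.sign_eq_neg_one_of_neg (by omega)
  simp only [sign_eq]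
  split_ifs <;> omega

section WeightedPerm

variable {ι R : Type*} [DecidableEq ι]

def weightedPerm [Zero R] (σ : Equiv.Perm ι) (w : ι → R) : Matrix ι ι R :=
  of fun x y => if y = σ x then w x else 0

@[simp]
lemma weightedPerm_apply [Zero R] (σ : Equiv.Perm ι) (w : ι → R) (x y : ι) :
    weightedPerm σ w x y = if y = σ x then w x else 0 :=
  rfl

lemma weightedPerm_mul [Fintype ι] [NonUnitalNonAssocSemiring R] (σ τ : Equiv.Perm ι)
    (w v : ι → R) :
    weightedPerm σ w * weightedPerm τ v = weightedPerm (τ * σ) fun x => w x * v (σ x) := by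
  ext x y
  rw [weightedPerm_apply, Equiv.Perm.mul_apply, mul_apply, Finset.sum_eq_single (σ x)] <;>
    simp +contextual

lemma weightedPerm_congr [Zero R] {σ τ : Equiv.Perm ι} {w : ι → R}
    (h : ∀ x, w x ≠ 0 → σ x = τ x) : weightedPerm σ w = weightedPerm τ w := by
  ext x y
  by_cases hw : w x = 0
  · simp [hw]
  · simp [h x hw]

end WeightedPerm

section LegSwaps

variable (α : Type*)

def legSwap12 : Equiv.Perm ((α × α) × α) :=
  Function.Involutive.toPerm (fun x => ((x.1.2, x.1.1), x.2)) fun _ => rfl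

def legSwap13 : Equiv.Perm ((α × α) × α) :=
  Function.Involutive.toPerm (fun x => ((x.2, x.1.2), x.1.1)) fun _ => rfl

def legSwap23 : Equiv.Perm ((α × α) × α) :=
  Function.Involutive.toPerm (fun x => ((x.1.1, x.2), x.1.2)) fun _ => rfl

variable {α} (x : (α × α) × α)

@[simp] lemma legSwap12_apply : legSwap12 α x = ((x.1.2, x.1.1), x.2) := rfl
@[simp] lemma legSwap13_apply : legSwap13 α x = ((x.2, x.1.2), x.1.1) := rfl
@[simp] lemma legSwap23_apply : legSwap23 α x = ((x.1.1, x.2), x.1.2) := rfl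

variable (α)

lemma legSwap12_mul_legSwap23 : legSwap12 α * legSwap23 α = legSwap13 α * legSwap12 α := rfl
lemma legSwap23_mul_legSwap13 : legSwap23 α * legSwap13 α = legSwap13 α * legSwap12 α := rfl
lemma legSwap23_mul_legSwap12 : legSwap23 α * legSwap12 α = legSwap12 α * legSwap13 α := rfl
lemma legSwap13_mul_legSwap23 : legSwap13 α * legSwap23 α = legSwap12 α * legSwap13 α := rfl

end LegSwaps

lemma sg_swap (n : ℕ) (i j : Fin n) : sg n j i = -sg n i j := by
  rw [sg, sg, ← neg_sub, Int.sign_neg, Int.cast_neg]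

def sgCyclicSum (n : ℕ) : (Fin n × Fin n) × Fin n → ℂ
  | ((a, b), c) => sg n a b * sg n b c + sg n b c * sg n c a + sg n c a * sg n a b

lemma sgCyclicSum_eq_neg_one {n : ℕ} {a b c : Fin n} (h : ¬(a = b ∧ b = c)) :
    sgCyclicSum n ((a, b), c) = -1 := by
  have h' : ¬((a : ℤ) = b ∧ (b : ℤ) = c) := by omega
  simp only [sgCyclicSum, sg]
  exact_mod_cast Int.sign_sub_mul_sign_sub_cyclic h'

noncomputable def tildeCoeff (n : ℕ) (i j : Fin n) : ℂ := (sg n i j + 1) / 2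

lemma half_smul_sum_sg_add {M : Type*} [AddCommGroup M] [Module ℂ M] (n : ℕ)
    (K : Fin n → Fin n → M) :
    (1/2 : ℂ) • ∑ i, ∑ j, sg n i j • K i j + (1/2 : ℂ) • ∑ i, ∑ j, K i j =
      ∑ i, ∑ j, tildeCoeff n i j • K i j := by
  simp only [Finset.smul_sum, ← Finset.sum_add_distrib, tildeCoeff, smul_smul, ← add_smul]
  congr! 3
  ring

lemma at12_eq (n : ℕ) :
    at12 n = weightedPerm (legSwap12 (Fin n)) fun x => tildeCoeff n x.1.1 x.1.2 := by
  rw [at12, half_smul_sum_sg_add]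
  ext ⟨⟨a, b⟩, c⟩ ⟨⟨a', b'⟩, c'⟩
  simp only [K3, E, Matrix.sum_apply, Matrix.smul_apply, kroneckerMap_apply, single_apply,
    one_apply, ite_and, mul_ite, mul_one, mul_zero, smul_eq_mul, Finset.sum_ite_irrel,
    Finset.sum_ite_eq', Finset.mem_univ, ↓reduceIte, Finset.sum_const_zero, weightedPerm_apply,
    legSwap12_apply, Prod.mk.injEq]
  grind

lemma at13_eq (n : ℕ) :
    at13 n = weightedPerm (legSwap13 (Fin n)) fun x => tildeCoeff n x.1.1 x.2 := by
  rw [at13, half_smul_sum_sg_add]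
  ext ⟨⟨a, b⟩, c⟩ ⟨⟨a', b'⟩, c'⟩
  simp only [K3, E, Matrix.sum_apply, Matrix.smul_apply, kroneckerMap_apply, single_apply,
    one_apply, ite_and, mul_ite, mul_one, mul_zero, smul_eq_mul, Finset.sum_ite_eq',
    Finset.mem_univ, ↓reduceIte, weightedPerm_apply, legSwap13_apply, Prod.mk.injEq]
  grind

lemma at23_eq (n : ℕ) :
    at23 n = weightedPerm (legSwap23 (Fin n)) fun x => tildeCoeff n x.1.2 x.2 := by
  rw [at23, half_smul_sum_sg_add]
  ext ⟨⟨a, b⟩, c⟩ ⟨⟨a', b'⟩, c'⟩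
  simp only [K3, E, Matrix.sum_apply, Matrix.smul_apply, kroneckerMap_apply, single_apply,
    one_apply, ite_and, mul_ite, mul_one, mul_zero, smul_eq_mul, Finset.sum_ite_eq',
    Finset.mem_univ, ↓reduceIte, weightedPerm_apply, legSwap23_apply, Prod.mk.injEq]
  grind

lemma tildeA_yangBaxter_eq (n : ℕ) :
    (at12 n * at13 n - at13 n * at12 n) + (at12 n * at23 n - at23 n * at12 n) +
      (at13 n * at23 n - at23 n * at13 n) =
      weightedPerm (legSwap13 _ * legSwap12 _) (fun x => (1 + sgCyclicSum n x) / 4) -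
        weightedPerm (legSwap12 _ * legSwap13 _) (fun x => (1 + sgCyclicSum n x) / 4) := by
  simp only [at12_eq, at13_eq, at23_eq, weightedPerm_mul, legSwap12_mul_legSwap23,
    legSwap23_mul_legSwap13, legSwap23_mul_legSwap12, legSwap13_mul_legSwap23]
  ext ⟨⟨a, b⟩, c⟩ y
  simp only [Matrix.add_apply, Matrix.sub_apply, weightedPerm_apply, legSwap12_apply,
    legSwap13_apply, legSwap23_apply, tildeCoeff, sgCyclicSum, sg_swap n a b, sg_swap n b c,
    sg_swap n a c]
  split_ifs <;> ring

theorem tilde_a_classical_YangBaxter (n : ℕ) :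
    (at12 n * at13 n - at13 n * at12 n) + (at12 n * at23 n - at23 n * at12 n) +
      (at13 n * at23 n - at23 n * at13 n) = 0 := by
  rw [tildeA_yangBaxter_eq, weightedPerm_congr, sub_self]
  rintro ⟨⟨a, b⟩, c⟩ hx
  obtain ⟨rfl, rfl⟩ : a = b ∧ b = c := by
    by_contra h
    exact hx (by rw [sgCyclicSum_eq_neg_one h]; norm_num)
  rfl
end

section
/- Let a, b, c, d be n×n⊗n×n matrices satisfying a₂₁ = −a₁₂, d₂₁ = −d₁₂, c₁₂ = b₂₁ (i.e. c = P b P with P the permutation operator) and a − c = d − b. Then for any n×n matrix L, setting L₁ = L⊗I, L₂ = I⊗L, r₁₂ = (1/2)(a₁₂ L₂ + L₂ a₁₂) − L₂ c₁₂ and r₂₁ = (1/2)(a₂₁ L₁ + L₁ a₂₁) − L₁ c₂₁, we have a L₁ L₂ − L₁ L₂ d + L₁ b L₂ − L₂ c L₁ = [r₁₂, L₁] − [r₂₁, L₂]. -/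
open Matrix BigOperators
open scoped Kronecker

/-- The permutation operator `P = Σ_{i,j} e_{ij} ⊗ e_{ji}`. -/
noncomputable def Pmat (n : ℕ) : Matrix (Fin n × Fin n) (Fin n × Fin n) ℂ :=
  ∑ i : Fin n, ∑ j : Fin n, E n i j ⊗ₖ E n j i

/-- For a two-site matrix `x₁₂`, the flipped matrix `x₂₁ = P x₁₂ P`. -/
noncomputable def swap (n : ℕ) (x : Matrix (Fin n × Fin n) (Fin n × Fin n) ℂ) :
    Matrix (Fin n × Fin n) (Fin n × Fin n) ℂ :=
  Pmat n * x * Pmat n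

lemma Pmat_apply (n : ℕ) (p q r s : Fin n) :
    Pmat n (p,q) (r,s) = if p = s ∧ q = r then 1 else 0 := by
  simp only [Pmat, E, Matrix.sum_apply, Matrix.kroneckerMap_apply,
    Matrix.single_apply, ite_and, mul_ite, mul_one, mul_zero]
  rw [Finset.sum_eq_single p]
  · rw [Finset.sum_eq_single r] <;> simp +contextual [eq_comm, and_comm] <;> split_ifs <;> simp
  · intro b _ hb
    apply Finset.sum_eq_zero
    intro j _
    simp +contextual [eq_comm (a := b), hb]
    intro _ _ h
    exact absurd h.symm hb
  · simp

lemma Pmat_mul_Pmat (n : ℕ) : Pmat n * Pmat n = 1 := by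
  ext ⟨p,q⟩ ⟨r,s⟩
  rw [Matrix.mul_apply, Fintype.sum_prod_type]
  simp only [Pmat_apply, ite_and, Finset.sum_ite_eq', Finset.mem_univ, if_true,
    mul_ite, mul_one, mul_zero, ite_mul, zero_mul, one_mul]
  simp [Matrix.one_apply, Prod.ext_iff, ite_and]

lemma swap_swap (n : ℕ) (x : Matrix (Fin n × Fin n) (Fin n × Fin n) ℂ) :
    swap n (swap n x) = x := by
  unfold _root_.swap
  rw [show Pmat n * (Pmat n * x * Pmat n) * Pmat n
      = (Pmat n * Pmat n) * x * (Pmat n * Pmat n) by noncomm_ring,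
    Pmat_mul_Pmat, one_mul, mul_one]

theorem quadratic_to_linear_r_matrix (n : ℕ)
    (a b c dm : Matrix (Fin n × Fin n) (Fin n × Fin n) ℂ)
    (ha : swap n a = -a) (hd : swap n dm = -dm) (hc : c = swap n b)
    (hreg : a - c = dm - b)
    (L : Matrix (Fin n) (Fin n) ℂ) :
    let L₁ : Matrix (Fin n × Fin n) (Fin n × Fin n) ℂ :=
      L ⊗ₖ (1 : Matrix (Fin n) (Fin n) ℂ)
    let L₂ : Matrix (Fin n × Fin n) (Fin n × Fin n) ℂ :=
      (1 : Matrix (Fin n) (Fin n) ℂ) ⊗ₖ L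
    let r₁₂ := (1/2 : ℂ) • (a * L₂ + L₂ * a) - L₂ * c
    let r₂₁ := (1/2 : ℂ) • (swap n a * L₁ + L₁ * swap n a) - L₁ * swap n c
    a * (L₁ * L₂) - L₁ * L₂ * dm + L₁ * b * L₂ - L₂ * c * L₁
      = (r₁₂ * L₁ - L₁ * r₁₂) - (r₂₁ * L₂ - L₂ * r₂₁) := by
  intro L₁ L₂ r₁₂ r₂₁
  have hsc : swap n c = b := by rw [hc, swap_swap]
  have hdm : dm = a - c + b := by
    rw [hreg]; abel
  have hL : L₂ * L₁ = L₁ * L₂ := by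
    show ((1 : Matrix (Fin n) (Fin n) ℂ) ⊗ₖ L) * (L ⊗ₖ 1) = (L ⊗ₖ 1) * (1 ⊗ₖ L)
    rw [← Matrix.mul_kronecker_mul, ← Matrix.mul_kronecker_mul]
    simp
  have hL2 : ∀ x : Matrix (Fin n × Fin n) (Fin n × Fin n) ℂ,
      L₂ * (L₁ * x) = L₁ * (L₂ * x) := fun x => by
    rw [← mul_assoc, hL, mul_assoc]
  show a * (L₁ * L₂) - L₁ * L₂ * dm + L₁ * b * L₂ - L₂ * c * L₁ =
    (r₁₂ * L₁ - L₁ * r₁₂) - (r₂₁ * L₂ - L₂ * r₂₁)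
  simp only [r₁₂, r₂₁, ha, hsc, hdm]
  simp only [mul_add, add_mul, mul_sub, sub_mul, smul_mul_assoc, Matrix.mul_smul,
    neg_mul, mul_neg, mul_assoc, hL, hL2]
  module
end
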